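/- Unique terminal assignment (each sample reaches exactly one terminal node). For every feasible flow assignment of a layered decision-diagram skeleton, define for each terminal node v ∈ C its total inflow w_v = Σ_{u∈V^I} (z⁺_{uv} + z⁻_{uv}). Then Σ_{v∈C} w_v = 1, and there exists a unique terminal node v̄ ∈ C with w_{v̄} = 1, while w_v = 0 for every other terminal node v ∈ C. -/

import Mathlib

/-- A layered decision-diagram skeleton: depth `D ≥ 1`, pairwise-disjoint nonempty
layers `V 0, …, V (D-1)` of internal nodes with `V 0 = {r}` (the root), and a
nonempty set `C` of terminal nodes disjoint from every layer. -/
structure Skeleton (Node : Type) [DecidableEq Node] where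
  D : ℕ
  hD : 1 ≤ D
  V : ℕ → Finset Node
  C : Finset Node
  r : Node
  hV0 : V 0 = {r}
  hVne : ∀ l, l < D → (V l).Nonempty
  hVdisj : ∀ l l', l < D → l' < D → l ≠ l' → Disjoint (V l) (V l')
  hCne : C.Nonempty
  hVC : ∀ l, l < D → Disjoint (V l) C

/-- The successor set `δ⁺(u)` of a node in layer `l`:
`V (l+1) ∪ C` if `l < D - 1`, and `C` if `l = D - 1`. -/
def Skeleton.succ {Node : Type} [DecidableEq Node] (S : Skeleton Node) (l : ℕ) :
    Finset Node :=
  if l < S.D - 1 then S.V (l + 1) ∪ S.C else S.C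

/-- A feasible flow assignment for a single sample on a layered decision-diagram
skeleton: nonnegative flows `wm, wp, zm, zp`, binary `lam, d, ym, yp` (with
`d r = 1`), subject to constraints (C1)–(C5). -/
structure FeasibleFlow {Node : Type} [DecidableEq Node] (S : Skeleton Node) where
  wm : Node → ℝ
  wp : Node → ℝ
  zm : Node → Node → ℝ
  zp : Node → Node → ℝ
  lam : ℕ → ℝ
  d : Node → ℝ
  ym : Node → Node → ℝ
  yp : Node → Node → ℝ
  wm_nonneg : ∀ u, 0 ≤ wm u
  wp_nonneg : ∀ u, 0 ≤ wp u
  zm_nonneg : ∀ u v, 0 ≤ zm u v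
  zp_nonneg : ∀ u v, 0 ≤ zp u v
  lam_bin : ∀ l, l < S.D → lam l = 0 ∨ lam l = 1
  d_bin : ∀ l, l < S.D → ∀ u ∈ S.V l, d u = 0 ∨ d u = 1
  d_root : d S.r = 1
  ym_bin : ∀ l, l < S.D → ∀ u ∈ S.V l, ∀ v ∈ S.succ l, ym u v = 0 ∨ ym u v = 1
  yp_bin : ∀ l, l < S.D → ∀ u ∈ S.V l, ∀ v ∈ S.succ l, yp u v = 0 ∨ yp u v = 1
  c1_root : wp S.r + wm S.r = 1
  c1 : ∀ l, 1 ≤ l → l < S.D → ∀ v ∈ S.V l,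
      wp v + wm v = ∑ u ∈ S.V (l - 1), (zp u v + zm u v)
  c2m : ∀ l, l < S.D → ∀ u ∈ S.V l, wm u = ∑ v ∈ S.succ l, zm u v
  c2p : ∀ l, l < S.D → ∀ u ∈ S.V l, wp u = ∑ v ∈ S.succ l, zp u v
  c3m : ∀ l, l < S.D → ∑ u ∈ S.V l, wm u ≤ 1 - lam l
  c3p : ∀ l, l < S.D → ∑ u ∈ S.V l, wp u ≤ lam l
  c4p : ∀ l, l < S.D → ∀ u ∈ S.V l, d u = ∑ v ∈ S.succ l, yp u v
  c4m : ∀ l, l < S.D → ∀ u ∈ S.V l, d u = ∑ v ∈ S.succ l, ym u v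
  c5p : ∀ l, l < S.D → ∀ u ∈ S.V l, ∀ v ∈ S.succ l, zp u v ≤ yp u v
  c5m : ∀ l, l < S.D → ∀ u ∈ S.V l, ∀ v ∈ S.succ l, zm u v ≤ ym u v

/-! Once the first `k` layers have routed their flow, the single unit of flow entering at the
root sits at exactly one node: either at a node of layer `k` or already at a terminal. Indeed a
node carrying flow `1` sends all of it along one arc, because `λ_l` kills one sign of the flow at
layer `l` and the binary arc indicators of that sign sum to `d_u ≤ 1`; a node carrying flow `0`
sends nothing. After the last layer only the terminal case is left. -/

open Finset

def IsPointMass {α M : Type*} [Zero M] [One M] (s : Finset α) (f : α → M) : Prop :=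
  ∃ a ∈ s, f a = 1 ∧ ∀ b ∈ s, b ≠ a → f b = 0

namespace IsPointMass

variable {α M : Type*} {s : Finset α} {f g : α → M}

lemma congr [Zero M] [One M] (h : IsPointMass s f) (hfg : ∀ x ∈ s, f x = g x) :
    IsPointMass s g := by
  obtain ⟨a, ha, h1, h0⟩ := h
  exact ⟨a, ha, hfg a ha ▸ h1, fun b hb hne => hfg b hb ▸ h0 b hb hne⟩

lemma sum_eq_one [AddCommMonoid M] [One M] (h : IsPointMass s f) : ∑ x ∈ s, f x = 1 := by
  obtain ⟨a, ha, h1, h0⟩ := h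
  rw [sum_eq_single_of_mem a ha h0, h1]

lemma existsUnique [Zero M] [One M] [NeZero (1 : M)] (h : IsPointMass s f) :
    ∃! a, a ∈ s ∧ f a = 1 ∧ ∀ b ∈ s, b ≠ a → f b = 0 := by
  obtain ⟨a, ha, h1, h0⟩ := h
  refine ⟨a, ⟨ha, h1, h0⟩, fun b ⟨hb, hb1, _⟩ => ?_⟩
  by_contra hne
  exact one_ne_zero (hb1 ▸ h0 b hb hne)

end IsPointMass

section PointMassCriteria

variable {α R : Type*} [DecidableEq α] [Field R] [LinearOrder R] [IsStrictOrderedRing R]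
  {s : Finset α} {z y : α → R}

lemma isPointMass_of_binary_of_sum_eq_one (hz : ∀ x ∈ s, z x = 0 ∨ z x = 1)
    (hsum : ∑ x ∈ s, z x = 1) : IsPointMass s z := by
  have hnonneg : ∀ x ∈ s, 0 ≤ z x := fun x hx => by rcases hz x hx with h | h <;> simp [h]
  obtain ⟨a, ha, hne⟩ := exists_ne_zero_of_sum_ne_zero (hsum ▸ one_ne_zero : ∑ x ∈ s, z x ≠ 0)
  have ha1 : z a = 1 := (hz a ha).resolve_left hne
  have hrest : ∑ x ∈ s.erase a, z x = 0 := by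
    have := add_sum_erase s z ha
    rw [hsum, ha1] at this
    linarith
  refine ⟨a, ha, ha1, fun b hb hba => ?_⟩
  exact (sum_eq_zero_iff_of_nonneg fun x hx => hnonneg x (mem_of_mem_erase hx)).mp hrest b
    (mem_erase.mpr ⟨hba, hb⟩)

lemma isPointMass_of_le_binary (hzy : ∀ x ∈ s, z x ≤ y x) (hy : ∀ x ∈ s, y x = 0 ∨ y x = 1)
    (hsum : ∑ x ∈ s, z x = 1) (hysum : ∑ x ∈ s, y x ≤ 1) : IsPointMass s z := by
  have hzy_sum : ∑ x ∈ s, z x = ∑ x ∈ s, y x :=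
    le_antisymm (sum_le_sum hzy) (hsum ▸ hysum)
  have hzy_eq : ∀ x ∈ s, z x = y x := (sum_eq_sum_iff_of_le hzy).mp hzy_sum
  exact isPointMass_of_binary_of_sum_eq_one (fun x hx => hzy_eq x hx ▸ hy x hx) hsum

end PointMassCriteria

namespace Skeleton

variable {Node : Type} [DecidableEq Node] (S : Skeleton Node)

/-- The nodes that can hold the flow once layers `0, …, k - 1` have routed it. -/
def frontier (k : ℕ) : Finset Node :=
  if k < S.D then S.V k ∪ S.C else S.C

variable {S}

lemma mem_frontier {k : ℕ} {x : Node} :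
    x ∈ S.frontier k ↔ (k < S.D ∧ x ∈ S.V k) ∨ x ∈ S.C := by
  unfold frontier
  split_ifs with hk <;> simp [hk]

lemma succ_eq_frontier (l : ℕ) : S.succ l = S.frontier (l + 1) := by
  unfold succ frontier
  exact if_congr (by omega) rfl rfl

lemma C_subset_succ (l : ℕ) : S.C ⊆ S.succ l :=
  fun _ hx => by rw [succ_eq_frontier]; exact mem_frontier.mpr (Or.inr hx)

lemma notMem_C_of_mem_V {l : ℕ} (hl : l < S.D) {x : Node} (hx : x ∈ S.V l) : x ∉ S.C :=
  disjoint_left.mp (S.hVC l hl) hx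

lemma frontier_D : S.frontier S.D = S.C := if_neg (lt_irrefl _)

end Skeleton

namespace FeasibleFlow

variable {Node : Type} [DecidableEq Node] {S : Skeleton Node} (F : FeasibleFlow S)

def nodeFlow (u : Node) : ℝ := F.wp u + F.wm u

def arcFlow (u v : Node) : ℝ := F.zp u v + F.zm u v

def terminalInflow (k : ℕ) (v : Node) : ℝ := ∑ l ∈ range k, ∑ u ∈ S.V l, F.arcFlow u v

/-- Where the flow is once layers `0, …, k - 1` have routed it, read on `S.frontier k`. -/
def profile (k : ℕ) (x : Node) : ℝ := if x ∈ S.C then F.terminalInflow k x else F.nodeFlow x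

variable {F} {l : ℕ} {u : Node}

lemma zp_eq_zero_of_wp_eq_zero (hl : l < S.D) (hu : u ∈ S.V l) (h : F.wp u = 0) :
    ∀ v ∈ S.succ l, F.zp u v = 0 :=
  (sum_eq_zero_iff_of_nonneg fun v _ => F.zp_nonneg u v).mp (h ▸ F.c2p l hl u hu).symm

lemma zm_eq_zero_of_wm_eq_zero (hl : l < S.D) (hu : u ∈ S.V l) (h : F.wm u = 0) :
    ∀ v ∈ S.succ l, F.zm u v = 0 :=
  (sum_eq_zero_iff_of_nonneg fun v _ => F.zm_nonneg u v).mp (h ▸ F.c2m l hl u hu).symm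

lemma arcFlow_eq_zero (hl : l < S.D) (hu : u ∈ S.V l) (h : F.nodeFlow u = 0) {v : Node}
    (hv : v ∈ S.succ l) : F.arcFlow u v = 0 := by
  have h : F.wp u + F.wm u = 0 := h
  have hwp : F.wp u = 0 := by linarith [F.wp_nonneg u, F.wm_nonneg u]
  have hwm : F.wm u = 0 := by linarith
  simp only [arcFlow, zp_eq_zero_of_wp_eq_zero hl hu hwp v hv,
    zm_eq_zero_of_wm_eq_zero hl hu hwm v hv, add_zero]

lemma d_le_one (hl : l < S.D) (hu : u ∈ S.V l) : F.d u ≤ 1 := by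
  rcases F.d_bin l hl u hu with h | h <;> simp [h]

lemma isPointMass_zp (hl : l < S.D) (hu : u ∈ S.V l) (h : F.wp u = 1) :
    IsPointMass (S.succ l) (F.zp u) :=
  isPointMass_of_le_binary (F.c5p l hl u hu) (F.yp_bin l hl u hu) (h ▸ F.c2p l hl u hu).symm
    (F.c4p l hl u hu ▸ d_le_one hl hu)

lemma isPointMass_zm (hl : l < S.D) (hu : u ∈ S.V l) (h : F.wm u = 1) :
    IsPointMass (S.succ l) (F.zm u) :=
  isPointMass_of_le_binary (F.c5m l hl u hu) (F.ym_bin l hl u hu) (h ▸ F.c2m l hl u hu).symm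
    (F.c4m l hl u hu ▸ d_le_one hl hu)

lemma isPointMass_arcFlow (hl : l < S.D) (hu : u ∈ S.V l) (h : F.nodeFlow u = 1) :
    IsPointMass (S.succ l) (F.arcFlow u) := by
  have h : F.wp u + F.wm u = 1 := h
  rcases F.lam_bin l hl with hlam | hlam
  · have hwp : F.wp u = 0 := le_antisymm
      ((single_le_sum (fun x _ => F.wp_nonneg x) hu).trans (hlam ▸ F.c3p l hl)) (F.wp_nonneg u)
    refine (isPointMass_zm hl hu (by linarith)).congr fun v hv => ?_
    simp [arcFlow, zp_eq_zero_of_wp_eq_zero hl hu hwp v hv]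
  · have hwm : F.wm u = 0 := le_antisymm
      ((single_le_sum (fun x _ => F.wm_nonneg x) hu).trans (by linarith [F.c3m l hl]))
      (F.wm_nonneg u)
    refine (isPointMass_zp hl hu (by linarith)).congr fun v hv => ?_
    simp [arcFlow, zm_eq_zero_of_wm_eq_zero hl hu hwm v hv]

variable (F) {k : ℕ}

lemma profile_succ {x : Node} (hx : x ∈ S.succ k) :
    F.profile (k + 1) x =
      (if x ∈ S.C then F.profile k x else 0) + ∑ u ∈ S.V k, F.arcFlow u x := by
  by_cases hxC : x ∈ S.C
  · simp [profile, hxC, terminalInflow, sum_range_succ]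
  · rw [Skeleton.succ_eq_frontier, Skeleton.mem_frontier, or_iff_left hxC] at hx
    simp only [profile, hxC, if_false, zero_add, nodeFlow, arcFlow]
    exact F.c1 (k + 1) (Nat.le_add_left 1 k) hx.1 x hx.2

lemma isPointMass_profile_zero : IsPointMass (S.frontier 0) (F.profile 0) := by
  have hr : S.r ∈ S.V 0 := S.hV0 ▸ mem_singleton_self S.r
  refine ⟨S.r, Skeleton.mem_frontier.mpr (Or.inl ⟨S.hD, hr⟩), ?_, fun b hb hbr => ?_⟩
  · simpa [profile, Skeleton.notMem_C_of_mem_V S.hD hr, nodeFlow] using F.c1_root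
  · by_cases hbC : b ∈ S.C
    · simp [profile, hbC, terminalInflow]
    · obtain ⟨-, hb⟩ := (Skeleton.mem_frontier.mp hb).resolve_right hbC
      exact absurd (mem_singleton.mp (S.hV0 ▸ hb)) hbr

lemma isPointMass_profile_succ (hk : k < S.D) (h : IsPointMass (S.frontier k) (F.profile k)) :
    IsPointMass (S.frontier (k + 1)) (F.profile (k + 1)) := by
  obtain ⟨a, ha, ha1, h0⟩ := h
  rw [← Skeleton.succ_eq_frontier]
  have hV : ∀ u ∈ S.V k, u ≠ a → F.nodeFlow u = 0 := fun u hu hne => by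
    simpa [profile, Skeleton.notMem_C_of_mem_V hk hu] using
      h0 u (Skeleton.mem_frontier.mpr (Or.inl ⟨hk, hu⟩)) hne
  by_cases haC : a ∈ S.C
  · have hout : ∀ x ∈ S.succ k, ∑ u ∈ S.V k, F.arcFlow u x = 0 := fun x hx =>
      sum_eq_zero fun u hu => arcFlow_eq_zero hk hu
        (hV u hu (ne_of_mem_of_not_mem haC (Skeleton.notMem_C_of_mem_V hk hu)).symm) hx
    have haS := Skeleton.C_subset_succ k haC
    refine ⟨a, haS, ?_, fun b hb hba => ?_⟩
    · rw [F.profile_succ haS, hout a haS, if_pos haC, ha1, add_zero]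
    · rw [F.profile_succ hb, hout b hb, add_zero]
      split_ifs with hbC
      · exact h0 b (Skeleton.mem_frontier.mpr (Or.inr hbC)) hba
      · rfl
  · obtain ⟨-, haV⟩ := (Skeleton.mem_frontier.mp ha).resolve_right haC
    have ha1 : F.nodeFlow a = 1 := by simpa [profile, haC] using ha1
    refine (isPointMass_arcFlow hk haV ha1).congr fun x hx => ?_
    rw [F.profile_succ hx, sum_eq_single_of_mem a haV fun u hu hne =>
      arcFlow_eq_zero hk hu (hV u hu hne) hx]
    split_ifs with hxC
    · rw [h0 x (Skeleton.mem_frontier.mpr (Or.inr hxC)) (ne_of_mem_of_not_mem hxC haC), zero_add]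
    · rw [zero_add]

lemma isPointMass_profile (hk : k ≤ S.D) : IsPointMass (S.frontier k) (F.profile k) := by
  induction k with
  | zero => exact F.isPointMass_profile_zero
  | succ k ih => exact F.isPointMass_profile_succ hk (ih (Nat.le_of_succ_le hk))

lemma isPointMass_terminalInflow : IsPointMass S.C (F.terminalInflow S.D) :=
  (Skeleton.frontier_D (S := S) ▸ F.isPointMass_profile le_rfl).congr fun _ hx => if_pos hx

end FeasibleFlow

/-- **Unique terminal assignment.** For every feasible flow assignment, defining
the total inflow of each terminal node `v ∈ C` as
`w_v = Σ_{u ∈ V^I} (z⁺_{uv} + z⁻_{uv})`, one has `Σ_{v∈C} w_v = 1`, and there is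
a unique terminal node `v̄ ∈ C` with `w_{v̄} = 1` while `w_v = 0` for every other
terminal node. -/
theorem unique_terminal_assignment {Node : Type} [DecidableEq Node]
    (S : Skeleton Node) (F : FeasibleFlow S) :
    (∑ v ∈ S.C, ∑ l ∈ Finset.range S.D, ∑ u ∈ S.V l,
        (F.zp u v + F.zm u v)) = 1 ∧
    ∃! vbar, vbar ∈ S.C ∧
      (∑ l ∈ Finset.range S.D, ∑ u ∈ S.V l, (F.zp u vbar + F.zm u vbar)) = 1 ∧
      (∀ v ∈ S.C, v ≠ vbar →
        (∑ l ∈ Finset.range S.D, ∑ u ∈ S.V l, (F.zp u v + F.zm u v)) = 0) := by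
  have h := F.isPointMass_terminalInflow
  exact ⟨h.sum_eq_one, h.existsUnique⟩
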